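/- arXiv:1007.4383 — 4 statements merged into one kernel-verified Lean document; each statement's English description precedes it below -/
import Mathlib

section
/- Let G be a closed graph. Then its clique complex Δ(G) is a closed complex: with the leaf order F_1,...,F_r coming from the interval structure of the facets, (I) F_{i,j} and F_{k,ℓ} are incomparable under inclusion (and both nonempty implies neither contains the other) whenever i < k and j < ℓ, and (C) F_{i+1,i+d} = F_{i,i+d} ∪ F_{i+1,i+d+1} whenever F_{i,i+d+1} ≠ ∅ with d ≥ 1. -/
/-- `F b` is a branch of the facet `F i` in the subcomplex `⟨F lo, …, F (r-1)⟩`: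
`b ≠ i` and every other facet meets `F i` inside `F b ∩ F i`. -/
def BranchOf {V : Type*} [DecidableEq V] (F : ℕ → Finset V) (lo r i b : ℕ) : Prop :=
  lo ≤ b ∧ b < r ∧ b ≠ i ∧
    ∀ j, lo ≤ j → j < r → j ≠ i → j ≠ b → F j ∩ F i ⊆ F b ∩ F i

/-- The complex with facets `F 0, …, F (r-1)` is a linear quasi-tree for this order:
each `F i` is a leaf of the subcomplex `⟨F i, …, F (r-1)⟩` and `F (i+1)` is its only
branch there. -/
def LinearQuasiTree {V : Type*} [DecidableEq V] (F : ℕ → Finset V) (r : ℕ) : Prop :=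
  ∀ i, i + 1 < r →
    (BranchOf F i r i (i + 1) ∧ ∀ b, BranchOf F i r i b → b = i + 1)

/-- A closed linear quasi-tree: a linear quasi-tree satisfying the incomparability
condition (I) and the covering condition (C). -/
def ClosedLQT {V : Type*} [DecidableEq V] (F : ℕ → Finset V) (r : ℕ) : Prop :=
  LinearQuasiTree F r ∧
  -- (I) incomparability
  (∀ i j k l, i ≤ j → k ≤ l → i < k → j < l → j < r → l < r →
    (F i ∩ F j).Nonempty → (F k ∩ F l).Nonempty →
    ¬ F i ∩ F j ⊆ F k ∩ F l ∧ ¬ F k ∩ F l ⊆ F i ∩ F j) ∧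
  -- (C) covering
  (∀ i d, 1 ≤ d → i + d + 1 < r → (F i ∩ F (i + d + 1)).Nonempty →
    F (i + 1) ∩ F (i + d) = (F i ∩ F (i + d)) ∪ (F (i + 1) ∩ F (i + d + 1)))

/-- `s` is a facet of the clique complex `Δ(G)`, i.e. a maximal clique of `G`. -/
def IsFacet {V : Type*} (G : SimpleGraph V) (s : Finset V) : Prop :=
  G.IsClique (s : Set V) ∧ ∀ t : Finset V, G.IsClique (t : Set V) → s ⊆ t → s = t

/-- `F 0, …, F (r-1)` is an enumeration (without repetitions) of the facets of the
clique complex `Δ(G)`. -/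
def FacetEnum {V : Type*} (G : SimpleGraph V) (F : ℕ → Finset V) (r : ℕ) : Prop :=
  (∀ i, i < r → IsFacet G (F i)) ∧
  (∀ s : Finset V, IsFacet G s → ∃ i, i < r ∧ F i = s) ∧
  (∀ i j, i < r → j < r → F i = F j → i = j)

/-!
Both endpoint sequences of the facets `[m i, M i]` are strictly increasing, so for `i ≤ j` the
intersection `F_{i,j}` is the interval `[m j, M i]`. Every condition then reduces to comparing
endpoints: `F_{i+1}` is the unique branch of `F_i` because it contains `m (i+1)`, which no later
facet does; in (I), `m j` separates `F_{i,j}` from `F_{k,l}` and `M k` separates them the other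
way; and (C) is the splitting of `[m (i+d), M (i+1)]` at `M i`, which `m (i+d+1)` does not exceed.
-/

lemma strictMonoOn_Iio_of_lt_succ {β : Type*} [Preorder β] {f : ℕ → β} {r : ℕ}
    (hf : ∀ i, i + 1 < r → f i < f (i + 1)) : StrictMonoOn f (Set.Iio r) :=
  strictMonoOn_of_lt_succ Set.ordConnected_Iio fun i _ _ hi => hf i hi

section IntervalFacets

variable {α : Type*} [LinearOrder α] [LocallyFiniteOrder α] {r : ℕ} {m M : ℕ → α}

open Finset

lemma linearQuasiTree_Icc (hm : StrictMonoOn m (Set.Iio r)) (hM : StrictMonoOn M (Set.Iio r))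
    (hcons : ∀ i, i + 1 < r → m (i + 1) ≤ M i) :
    LinearQuasiTree (fun i => Icc (m i) (M i)) r := by
  intro i hi
  have hmi : m i < m (i + 1) := hm (by simp; omega) hi (by omega)
  have hMi : M i < M (i + 1) := hM (by simp; omega) hi (by omega)
  refine ⟨⟨by omega, hi, by omega, fun j _ hj _ _ x hx => ?_⟩, fun b ⟨_, hb, _, hbranch⟩ => ?_⟩
  · have hmj : m (i + 1) ≤ m j := hm.monotoneOn hi hj (by omega)
    simp only [mem_inter, mem_Icc] at hx ⊢
    refine ⟨⟨?_, ?_⟩, hx.2⟩ <;> order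
  · by_contra hb'
    have hlt : m (i + 1) < m b := hm hi hb (by omega)
    have hmem : m (i + 1) ∈ Icc (m (i + 1)) (M (i + 1)) ∩ Icc (m i) (M i) := by
      have hcons_i := hcons i hi
      simp only [mem_inter, mem_Icc]
      refine ⟨⟨?_, ?_⟩, ?_, ?_⟩ <;> order
    have hmem_b := hbranch (i + 1) (by omega) hi (by omega) (Ne.symm hb') hmem
    simp only [mem_inter, mem_Icc] at hmem_b
    order

lemma incomparable_inter_Icc (hm : StrictMonoOn m (Set.Iio r)) (hM : StrictMonoOn M (Set.Iio r))
    {i j k l : ℕ} (hij : i ≤ j) (hkl : k ≤ l) (hik : i < k) (hjl : j < l) (hlr : l < r)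
    (hne : (Icc (m i) (M i) ∩ Icc (m j) (M j)).Nonempty)
    (hne' : (Icc (m k) (M k) ∩ Icc (m l) (M l)).Nonempty) :
    ¬ Icc (m i) (M i) ∩ Icc (m j) (M j) ⊆ Icc (m k) (M k) ∩ Icc (m l) (M l) ∧
      ¬ Icc (m k) (M k) ∩ Icc (m l) (M l) ⊆ Icc (m i) (M i) ∩ Icc (m j) (M j) := by
  obtain ⟨x, hx⟩ := hne
  obtain ⟨y, hy⟩ := hne'
  simp only [mem_inter, mem_Icc] at hx hy
  have hmij : m i ≤ m j := hm.monotoneOn (by simp; omega) (by simp; omega) hij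
  have hmjl : m j < m l := hm (by simp; omega) hlr hjl
  have hMik : M i < M k := hM (by simp; omega) (by simp; omega) hik
  have hMkl : M k ≤ M l := hM.monotoneOn (by simp; omega) hlr hkl
  constructor
  · intro hsub
    have hmj := @hsub (m j) (by simp only [mem_inter, mem_Icc]; refine ⟨⟨?_, ?_⟩, ?_, ?_⟩ <;> order)
    simp only [mem_inter, mem_Icc] at hmj
    order
  · intro hsub
    have hMk := @hsub (M k) (by simp only [mem_inter, mem_Icc]; refine ⟨⟨?_, ?_⟩, ?_, ?_⟩ <;> order)
    simp only [mem_inter, mem_Icc] at hMk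
    order

lemma covering_inter_Icc (hm : StrictMonoOn m (Set.Iio r)) (hM : StrictMonoOn M (Set.Iio r))
    {i d : ℕ} (hd : 1 ≤ d) (hr : i + d + 1 < r)
    (hne : (Icc (m i) (M i) ∩ Icc (m (i + d + 1)) (M (i + d + 1))).Nonempty) :
    Icc (m (i + 1)) (M (i + 1)) ∩ Icc (m (i + d)) (M (i + d)) =
      Icc (m i) (M i) ∩ Icc (m (i + d)) (M (i + d)) ∪
        Icc (m (i + 1)) (M (i + 1)) ∩ Icc (m (i + d + 1)) (M (i + d + 1)) := by
  obtain ⟨z, hz⟩ := hne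
  simp only [mem_inter, mem_Icc] at hz
  have hm₀₁ : m i ≤ m (i + 1) := hm.monotoneOn (by simp; omega) (by simp; omega) (by omega)
  have hm₁d : m (i + 1) ≤ m (i + d) := hm.monotoneOn (by simp; omega) (by simp; omega) (by omega)
  have hmd : m (i + d) ≤ m (i + d + 1) := hm.monotoneOn (by simp; omega) hr (by omega)
  have hM₀₁ : M i ≤ M (i + 1) := hM.monotoneOn (by simp; omega) (by simp; omega) (by omega)
  have hM₁d : M (i + 1) ≤ M (i + d) := hM.monotoneOn (by simp; omega) (by simp; omega) (by omega)
  have hM₁d₁ : M (i + 1) ≤ M (i + d + 1) := hM.monotoneOn (by simp; omega) hr (by omega)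
  ext x
  simp only [mem_inter, mem_union, mem_Icc]
  constructor
  · rintro ⟨⟨_, hx⟩, hx', _⟩
    rcases le_total x (M i) with hxi | hxi
    · left; refine ⟨⟨?_, ?_⟩, ?_, ?_⟩ <;> order
    · right; refine ⟨⟨?_, ?_⟩, ?_, ?_⟩ <;> order
  · rintro (h | h) <;> refine ⟨⟨?_, ?_⟩, ?_, ?_⟩ <;> order

end IntervalFacets

theorem stmt9_general (r : ℕ)
    (m M : ℕ → ℕ)
    (hm : ∀ i, i + 1 < r → m i < m (i + 1))
    (hM : ∀ i, i + 1 < r → M i < M (i + 1))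
    (hcons : ∀ i, i + 1 < r → m (i + 1) ≤ M i) :
    ClosedLQT (fun i => Finset.Icc (m i) (M i)) r := by
  have hm := strictMonoOn_Iio_of_lt_succ hm
  have hM := strictMonoOn_Iio_of_lt_succ hM
  exact ⟨linearQuasiTree_Icc hm hM hcons,
    fun _ _ _ _ hij hkl hik hjl _ hlr => incomparable_inter_Icc hm hM hij hkl hik hjl hlr,
    fun _ _ hd hr => covering_inter_Icc hm hM hd hr⟩

/-- Let `G` be a connected closed graph on `[n]`, so that the facets of
`Δ(G)` are the intervals `F i = [m i, M i]` with the leaf order coming from the interval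
structure. Then `Δ(G)` is a closed complex: it is a linear quasi-tree satisfying the
incomparability condition (I) (`F_{i,j}` and `F_{k,l}` are incomparable whenever both are
nonempty and `i < k`, `j < l`) and the covering condition (C)
(`F_{i+1,i+d} = F_{i,i+d} ∪ F_{i+1,i+d+1}` whenever `F_{i,i+d+1} ≠ ∅`, `d ≥ 1`). -/
theorem stmt9 (n r : ℕ) (hr : 1 ≤ r) (G : SimpleGraph ℕ) (hconn : G.Connected)
    (m M : ℕ → ℕ)
    (hm0 : m 0 = 1) (hMr : M (r - 1) = n)
    (hm : ∀ i, i + 1 < r → m i < m (i + 1))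
    (hM : ∀ i, i + 1 < r → M i < M (i + 1))
    (hmM : ∀ i, i < r → m i < M i)
    (hcons : ∀ i, i + 1 < r → m (i + 1) ≤ M i)
    (hfac : FacetEnum G (fun i => Finset.Icc (m i) (M i)) r) :
    ClosedLQT (fun i => Finset.Icc (m i) (M i)) r :=
  stmt9_general r m M hm hM hcons
end

section
/- Let Δ = ⟨F_1,...,F_r⟩ be a closed linear quasi-tree and suppose F_i ∩ F_j ≠ ∅ for some i ≤ j. Then F_i ∪ F_j = F_i ∪ F_{i+1} ∪ ... ∪ F_j; moreover this union equals (⋃_{k=i}^{j-1} F_{i,k}) ∪ (⋃_{k=i+1}^{j} F_{k,j}) ∪ F_{i,j}. -/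
/-!
Each facet meets the later ones inside its successor, so `F i ∩ F j ⊆ F k` whenever
`i ≤ k ≤ j`; in particular `F k ∩ F j` is nonempty along the way. Condition (C) then pushes a
vertex of `F (k+1) \ F k` from `F (k+1) ∩ F m` to `F (k+1) ∩ F (m+1)`, for `m` running from
`k+1` to `j`, so `F (k+1) ⊆ F k ∪ F j`. Chaining these inclusions from `k = i` gives
`F k ⊆ F i ∪ F j` for every `i ≤ k ≤ j`; the second description of the union is bookkeeping.
-/

def CoveringCondition {V : Type*} [DecidableEq V] (F : ℕ → Finset V) (r : ℕ) : Prop :=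
  ∀ i d, 1 ≤ d → i + d + 1 < r → (F i ∩ F (i + d + 1)).Nonempty →
    F (i + 1) ∩ F (i + d) = (F i ∩ F (i + d)) ∪ (F (i + 1) ∩ F (i + d + 1))

section

variable {V : Type*} [DecidableEq V] {F : ℕ → Finset V} {r : ℕ}

theorem ClosedLQT.coveringCondition (hc : ClosedLQT F r) : CoveringCondition F r :=
  hc.2.2

theorem CoveringCondition.inter_subset_union (hC : CoveringCondition F r) {k m : ℕ}
    (hkm : k < m) (hmr : m + 1 < r) (hne : (F k ∩ F (m + 1)).Nonempty) :
    F (k + 1) ∩ F m ⊆ F k ∪ F (m + 1) := by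
  have h := hC k (m - k) (by omega) (by omega) (by rwa [show k + (m - k) + 1 = m + 1 by omega])
  rw [show k + (m - k) = m by omega] at h
  rw [h]
  exact Finset.union_subset_union Finset.inter_subset_left Finset.inter_subset_right

namespace LinearQuasiTree

theorem inter_subset_succ (hq : LinearQuasiTree F r) {k j : ℕ} (hkj : k < j) (hjr : j < r) :
    F k ∩ F j ⊆ F (k + 1) := by
  rcases eq_or_ne j (k + 1) with rfl | hj
  · exact Finset.inter_subset_right
  · intro x hx
    have hbranch := (hq k (by omega)).1.2.2.2 j (by omega) hjr (by omega) hj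
    rw [Finset.inter_comm] at hx
    exact Finset.mem_of_mem_inter_left (hbranch hx)

theorem inter_subset (hq : LinearQuasiTree F r) {i k j : ℕ} (hik : i ≤ k) (hkj : k ≤ j)
    (hjr : j < r) : F i ∩ F j ⊆ F k := by
  induction k, hik using Nat.le_induction with
  | base => exact Finset.inter_subset_left
  | succ k _ ih =>
    intro x hx
    exact hq.inter_subset_succ (by omega) hjr
      (Finset.mem_inter.mpr ⟨ih (by omega) hx, Finset.mem_of_mem_inter_right hx⟩)

theorem inter_subset_inter_left (hq : LinearQuasiTree F r) {i k j : ℕ} (hik : i ≤ k)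
    (hkj : k ≤ j) (hjr : j < r) : F i ∩ F j ⊆ F i ∩ F k :=
  Finset.subset_inter Finset.inter_subset_left (hq.inter_subset hik hkj hjr)

theorem inter_subset_inter_right (hq : LinearQuasiTree F r) {i k j : ℕ} (hik : i ≤ k)
    (hkj : k ≤ j) (hjr : j < r) : F i ∩ F j ⊆ F k ∩ F j :=
  Finset.subset_inter (hq.inter_subset hik hkj hjr) Finset.inter_subset_right

theorem succ_subset_union (hq : LinearQuasiTree F r) (hC : CoveringCondition F r) {k j : ℕ}
    (hkj : k < j) (hjr : j < r) (hne : (F k ∩ F j).Nonempty) :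
    F (k + 1) ⊆ F k ∪ F j := by
  refine sdiff_le_iff.mp ?_
  suffices h : ∀ m, k + 1 ≤ m → m ≤ j → F (k + 1) \ F k ⊆ F m from h j hkj le_rfl
  intro m hkm
  induction m, hkm using Nat.le_induction with
  | base => intro _; exact Finset.sdiff_subset
  | succ m hkm ih =>
    intro hmj x hx
    obtain ⟨hxk1, hxk⟩ := Finset.mem_sdiff.mp hx
    have hne' := hne.mono (hq.inter_subset_inter_left (by omega) hmj hjr)
    have hxm : x ∈ F (k + 1) ∩ F m := Finset.mem_inter.mpr ⟨hxk1, ih (by omega) hx⟩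
    exact (Finset.mem_union.mp (hC.inter_subset_union hkm (by omega) hne' hxm)).resolve_left hxk

theorem subset_union (hq : LinearQuasiTree F r) (hC : CoveringCondition F r) {i k j : ℕ}
    (hik : i ≤ k) (hkj : k ≤ j) (hjr : j < r) (hne : (F i ∩ F j).Nonempty) :
    F k ⊆ F i ∪ F j := by
  induction k, hik using Nat.le_induction with
  | base => exact Finset.subset_union_left
  | succ k hik ih =>
    have hne' := hne.mono (hq.inter_subset_inter_right hik (by omega) hjr)
    exact (hq.succ_subset_union hC (by omega) hjr hne').trans
      (Finset.union_subset (ih (by omega)) Finset.subset_union_right)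

end LinearQuasiTree

end

/-- Let `⟨F 0, …, F (r-1)⟩` be a closed linear quasi-tree and suppose
`F i ∩ F j ≠ ∅` for some `i ≤ j < r`. Then
`F i ∪ F j = F i ∪ F (i+1) ∪ … ∪ F j`, and this union also equals
`(⋃_{k=i}^{j-1} F i ∩ F k) ∪ (⋃_{k=i+1}^{j} F k ∩ F j) ∪ (F i ∩ F j)`. -/
theorem stmt10 {V : Type*} [DecidableEq V] (F : ℕ → Finset V) (r : ℕ)
    (hc : ClosedLQT F r) (i j : ℕ) (hij : i ≤ j) (hjr : j < r)
    (hne : (F i ∩ F j).Nonempty) :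
    (∀ v, v ∈ F i ∪ F j ↔ ∃ k, i ≤ k ∧ k ≤ j ∧ v ∈ F k) ∧
    (∀ v, v ∈ F i ∪ F j ↔
      (∃ k, i ≤ k ∧ k < j ∧ v ∈ F i ∩ F k) ∨
      (∃ k, i < k ∧ k ≤ j ∧ v ∈ F k ∩ F j) ∨ v ∈ F i ∩ F j) := by
  refine ⟨fun v => ⟨fun hv => ?_, fun ⟨k, hik, hkj, hv⟩ => ?_⟩, fun v => ⟨fun hv => ?_, ?_⟩⟩
  · rcases Finset.mem_union.mp hv with h | h
    exacts [⟨i, le_rfl, hij, h⟩, ⟨j, hij, le_rfl, h⟩]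
  · exact hc.1.subset_union hc.coveringCondition hik hkj hjr hne hv
  · rcases hij.lt_or_eq with hlt | rfl
    · rcases Finset.mem_union.mp hv with h | h
      · exact Or.inl ⟨i, le_rfl, hlt, Finset.mem_inter.mpr ⟨h, h⟩⟩
      · exact Or.inr (Or.inl ⟨j, hlt, le_rfl, Finset.mem_inter.mpr ⟨h, h⟩⟩)
    · exact Or.inr (Or.inr (by simpa using hv))
  · rintro (⟨k, -, -, hv⟩ | ⟨k, -, -, hv⟩ | hv)
    · exact Finset.mem_union_left _ (Finset.mem_of_mem_inter_left hv)
    · exact Finset.mem_union_right _ (Finset.mem_of_mem_inter_right hv)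
    · exact Finset.mem_union_left _ (Finset.mem_of_mem_inter_left hv)
end

section
/- Let G be a graph whose clique complex Δ(G) is a closed linear quasi-tree with leaf order F_1,...,F_r. Define a total order on V(G) by fixing an arbitrary total order within each block F'_{i,j} of the partition from the border elements, and declaring u < v if u ∈ F'_{i,j}, v ∈ F'_{k,ℓ} with i < k, or i = k and j < ℓ. Then G is closed with respect to the resulting labelling. -/
/-- `G` is closed with respect to the (strict) ordering `lt` of its vertices:
for any two edges sharing the smaller endpoint the two larger endpoints are adjacent,
and for any two edges sharing the larger endpoint the two smaller endpoints are adjacent. -/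
def ClosedWrt {V : Type*} (G : SimpleGraph V) (lt : V → V → Prop) : Prop :=
  ∀ i j k : V, G.Adj i j → G.Adj i k → j ≠ k →
    ((lt i j → lt i k → G.Adj j k) ∧ (lt j i → lt k i → G.Adj j k))

/-- `F_{i,j} = F i ∩ F j` is a border element of the poset `P`, i.e. `F_{i-1,j+1}` is
empty or undefined (with the convention `F_{i,j} = ∅` if `i < 1` or `j > r`). -/
def Border {V : Type*} [DecidableEq V] (F : ℕ → Finset V) (r i j : ℕ) : Prop :=
  i ≤ j ∧ j < r ∧ (i = 0 ∨ j + 1 = r ∨ F (i - 1) ∩ F (j + 1) = ∅)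

/-- `F'_{i,j} = F_{i,j} \ (F_{i-1,j} ∪ F_{i,j+1})`, with the convention that the
out-of-range intersections are empty. -/
def Fblock {V : Type*} [DecidableEq V] (F : ℕ → Finset V) (r i j : ℕ) : Finset V :=
  (F i ∩ F j) \
    ((if i = 0 then ∅ else F (i - 1) ∩ F j) ∪ (if j + 1 < r then F i ∩ F (j + 1) else ∅))

/-! The facets containing a vertex `v` are `F a, …, F b` for an interval `[a, b]`, because in a
linear quasi-tree `F (i+1)` is the unique branch of `F i`. Then `v` lies in the block `F'_{a,b}`,
and the covering condition (C) makes `F_{a,b}` a border element. Two vertices are adjacent iff their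
intervals meet, and by the border property no interval strictly contains another, so `a < a'`
forces `b ≤ b'`. Hence the labelling is monotone in both endpoints of the intervals, which is all
that closedness of an interval graph needs. -/

section ClosedOfIntervals

variable {V ι : Type*} [Preorder ι]

theorem closedWrt_of_intervals (G : SimpleGraph V) (lt : V → V → Prop) (a b : V → ι)
    (hadj : ∀ u v, G.Adj u v ↔ u ≠ v ∧ a u ≤ b v ∧ a v ≤ b u)
    (hmono : ∀ u v, lt u v → a u ≤ a v ∧ b u ≤ b v) :
    ClosedWrt G lt := by
  intro i j k hij hik hjk
  obtain ⟨-, hij₁, hij₂⟩ := (hadj i j).1 hij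
  obtain ⟨-, hik₁, hik₂⟩ := (hadj i k).1 hik
  refine ⟨fun h₁ h₂ => ?_, fun h₁ h₂ => ?_⟩
  · exact (hadj j k).2 ⟨hjk, hij₂.trans (hmono i k h₂).2, hik₂.trans (hmono i j h₁).2⟩
  · exact (hadj j k).2 ⟨hjk, (hmono j i h₁).1.trans hik₁, (hmono k i h₂).1.trans hij₁⟩

end ClosedOfIntervals

section Facets

variable {V : Type*} {G : SimpleGraph V} {F : ℕ → Finset V} {r : ℕ}

theorem exists_isFacet_superset [Finite V] {s : Finset V} (hs : G.IsClique (s : Set V)) :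
    ∃ t, IsFacet G t ∧ s ⊆ t := by
  obtain ⟨t, hst, ht, hmax⟩ := Finite.exists_le_maximal (p := fun t : Finset V => G.IsClique ↑t) hs
  exact ⟨t, ⟨ht, fun u hu htu => le_antisymm htu (hmax hu htu)⟩, hst⟩

theorem FacetEnum.exists_superset [Finite V] (hfac : FacetEnum G F r) {s : Finset V}
    (hs : G.IsClique (s : Set V)) : ∃ m < r, s ⊆ F m := by
  obtain ⟨t, ht, hst⟩ := exists_isFacet_superset hs
  obtain ⟨m, hm, rfl⟩ := hfac.2.1 t ht
  exact ⟨m, hm, hst⟩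

end Facets

section FacetIndices

variable {V : Type*} (F : ℕ → Finset V) (r : ℕ) (v : V)

def facetIndices : Set ℕ := {m | m < r ∧ v ∈ F m}

noncomputable def firstFacet : ℕ := sInf (facetIndices F r v)

noncomputable def lastFacet : ℕ := sSup (facetIndices F r v)

variable {F r v} {m : ℕ}

theorem bddAbove_facetIndices : BddAbove (facetIndices F r v) := ⟨r, fun _ hm => hm.1.le⟩

theorem firstFacet_le (hm : m ∈ facetIndices F r v) : firstFacet F r v ≤ m := Nat.sInf_le hm

theorem le_lastFacet (hm : m ∈ facetIndices F r v) : m ≤ lastFacet F r v :=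
  le_csSup bddAbove_facetIndices hm

theorem firstFacet_mem (hv : (facetIndices F r v).Nonempty) :
    firstFacet F r v ∈ facetIndices F r v :=
  Nat.sInf_mem hv

theorem lastFacet_mem (hv : (facetIndices F r v).Nonempty) :
    lastFacet F r v ∈ facetIndices F r v :=
  Nat.sSup_mem hv bddAbove_facetIndices

theorem firstFacet_le_lastFacet (hv : (facetIndices F r v).Nonempty) :
    firstFacet F r v ≤ lastFacet F r v :=
  firstFacet_le (lastFacet_mem hv)

theorem FacetEnum.facetIndices_nonempty [Finite V] {G : SimpleGraph V} (hfac : FacetEnum G F r)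
    (v : V) : (facetIndices F r v).Nonempty := by
  obtain ⟨m, hm, hsub⟩ := hfac.exists_superset (s := {v}) (by simp)
  exact ⟨m, hm, hsub (Finset.mem_singleton_self v)⟩

variable [DecidableEq V]

theorem mem_Fblock_firstFacet_lastFacet (hv : (facetIndices F r v).Nonempty) :
    v ∈ Fblock F r (firstFacet F r v) (lastFacet F r v) := by
  have hf := firstFacet_mem hv
  have hl := lastFacet_mem hv
  simp only [Fblock, Finset.mem_sdiff, Finset.mem_union]
  refine ⟨Finset.mem_inter.2 ⟨hf.2, hl.2⟩, ?_⟩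
  rintro (h | h) <;> split_ifs at h with h₀
  · simp at h
  · have : firstFacet F r v ≤ firstFacet F r v - 1 :=
      firstFacet_le ⟨by have := hf.1; omega, (Finset.mem_inter.1 h).1⟩
    omega
  · have : lastFacet F r v + 1 ≤ lastFacet F r v := le_lastFacet ⟨h₀, (Finset.mem_inter.1 h).2⟩
    omega
  · simp at h

end FacetIndices

namespace LinearQuasiTree

variable {V : Type*} [DecidableEq V] {F : ℕ → Finset V} {r : ℕ} {v : V}

theorem mem_succ (h : LinearQuasiTree F r) {i j : ℕ} (hij : i < j) (hj : j < r)
    (hvi : v ∈ F i) (hvj : v ∈ F j) : v ∈ F (i + 1) := by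
  rcases (Nat.succ_le_of_lt hij).eq_or_lt with rfl | hij'
  · exact hvj
  · have hbranch := (h i (hij'.trans hj)).1.2.2.2 j hij.le hj hij.ne' hij'.ne'
    exact (Finset.mem_inter.1 (hbranch (Finset.mem_inter.2 ⟨hvj, hvi⟩))).1

theorem mem_of_le_of_le (h : LinearQuasiTree F r) {i j m : ℕ} (him : i ≤ m) (hmj : m ≤ j)
    (hj : j < r) (hvi : v ∈ F i) (hvj : v ∈ F j) : v ∈ F m := by
  induction m, him using Nat.le_induction with
  | base => exact hvi
  | succ n hin ih => exact h.mem_succ (by omega) hj (ih (by omega)) hvj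

theorem mem_facetIndices_iff (h : LinearQuasiTree F r) (hv : (facetIndices F r v).Nonempty)
    {m : ℕ} : m ∈ facetIndices F r v ↔ firstFacet F r v ≤ m ∧ m ≤ lastFacet F r v := by
  refine ⟨fun hm => ⟨firstFacet_le hm, le_lastFacet hm⟩, fun ⟨hfm, hml⟩ => ?_⟩
  have hl := lastFacet_mem hv
  exact ⟨hml.trans_lt hl.1, h.mem_of_le_of_le hfm hml hl.1 (firstFacet_mem hv).2 hl.2⟩

end LinearQuasiTree

theorem FacetEnum.adj_iff {V : Type*} [Finite V] [DecidableEq V] {G : SimpleGraph V}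
    {F : ℕ → Finset V} {r : ℕ} (hfac : FacetEnum G F r) (hlqt : LinearQuasiTree F r) (u v : V) :
    G.Adj u v ↔ u ≠ v ∧ firstFacet F r u ≤ lastFacet F r v ∧ firstFacet F r v ≤ lastFacet F r u := by
  have hu := hfac.facetIndices_nonempty u
  have hv := hfac.facetIndices_nonempty v
  constructor
  · intro huv
    obtain ⟨m, hm, hsub⟩ := hfac.exists_superset (s := {u, v}) (by simpa using fun _ => huv)
    obtain ⟨hum, hmu⟩ := (hlqt.mem_facetIndices_iff hu).1 ⟨hm, hsub (by simp)⟩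
    obtain ⟨hvm, hmv⟩ := (hlqt.mem_facetIndices_iff hv).1 ⟨hm, hsub (by simp)⟩
    exact ⟨huv.ne, hum.trans hmv, hvm.trans hmu⟩
  · rintro ⟨hne, huv, hvu⟩
    set m := max (firstFacet F r u) (firstFacet F r v)
    have hmu := (hlqt.mem_facetIndices_iff hu).2
      ⟨le_max_left _ _, max_le (firstFacet_le_lastFacet hu) hvu⟩
    have hmv := (hlqt.mem_facetIndices_iff hv).2
      ⟨le_max_right _ _, max_le huv (firstFacet_le_lastFacet hv)⟩
    exact (hfac.1 m hmu.1).1 hmu.2 hmv.2 hne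

namespace ClosedLQT

variable {V : Type*} [DecidableEq V] {F : ℕ → Finset V} {r : ℕ} {u v : V}

theorem border_firstFacet_lastFacet (hc : ClosedLQT F r) (hv : (facetIndices F r v).Nonempty) :
    Border F r (firstFacet F r v) (lastFacet F r v) := by
  set a := firstFacet F r v
  set b := lastFacet F r v
  have ha := firstFacet_mem hv
  have hb := lastFacet_mem hv
  have hbr := hb.1
  have hab : a ≤ b := firstFacet_le_lastFacet hv
  refine ⟨hab, hbr, or_iff_not_imp_left.2 fun ha₀ => or_iff_not_imp_left.2 fun hb₁ => ?_⟩
  by_contra hne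
  have e₁ : a - 1 + 1 = a := by omega
  have e₂ : a - 1 + (b - a + 1) = b := by omega
  have hcov := hc.2.2 (a - 1) (b - a + 1) le_add_self (by omega)
    (by rw [e₂]; exact Finset.nonempty_iff_ne_empty.2 hne)
  rw [e₁, e₂] at hcov
  have hvab : v ∈ F (a - 1) ∩ F b ∪ F a ∩ F (b + 1) := hcov ▸ Finset.mem_inter.2 ⟨ha.2, hb.2⟩
  rcases Finset.mem_union.1 hvab with h | h
  · have : a ≤ a - 1 := firstFacet_le ⟨by omega, (Finset.mem_inter.1 h).1⟩
    omega
  · have : b + 1 ≤ b := le_lastFacet ⟨by omega, (Finset.mem_inter.1 h).2⟩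
    omega

theorem lastFacet_le_of_firstFacet_lt (hc : ClosedLQT F r) (hu : (facetIndices F r u).Nonempty)
    (hv : (facetIndices F r v).Nonempty) (h : firstFacet F r u < firstFacet F r v) :
    lastFacet F r u ≤ lastFacet F r v := by
  by_contra! hlt
  have hmem : ∀ m, firstFacet F r u ≤ m → m ≤ lastFacet F r u → u ∈ F m :=
    fun m h₁ h₂ => ((hc.1.mem_facetIndices_iff hu).2 ⟨h₁, h₂⟩).2
  have := firstFacet_le_lastFacet hv
  rcases (hc.border_firstFacet_lastFacet hv).2.2 with h₀ | hr | hempty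
  · omega
  · have := (lastFacet_mem hu).1
    omega
  · have hw : u ∈ F (firstFacet F r v - 1) ∩ F (lastFacet F r v + 1) :=
      Finset.mem_inter.2 ⟨hmem _ (by omega) (by omega), hmem _ (by omega) (by omega)⟩
    simp [hempty] at hw

end ClosedLQT

/-- Let `G` be a graph whose clique complex `Δ(G) = ⟨F 0, …, F (r-1)⟩`
is a closed linear quasi-tree. Let `lt` be any strict total order of `V(G)` obtained by
ordering the blocks `F'_{i,j}` of the partition given by the border elements
lexicographically in `(i,j)` (and arbitrarily within each block). Then `G` is closed
with respect to the resulting labelling. -/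
theorem stmt12 {V : Type*} [Fintype V] [DecidableEq V] (G : SimpleGraph V)
    (F : ℕ → Finset V) (r : ℕ) (hfac : FacetEnum G F r) (hc : ClosedLQT F r)
    (lt : V → V → Prop) (hto : IsStrictTotalOrder V lt)
    (hcompat : ∀ u v i j k l, Border F r i j → Border F r k l →
      u ∈ Fblock F r i j → v ∈ Fblock F r k l →
      (i < k ∨ (i = k ∧ j < l)) → lt u v) :
    ClosedWrt G lt := by
  have hne := hfac.facetIndices_nonempty
  refine closedWrt_of_intervals G lt (firstFacet F r) (lastFacet F r) (hfac.adj_iff hc.1)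
    fun u v huv => ?_
  have hlex : firstFacet F r u < firstFacet F r v ∨
      firstFacet F r u = firstFacet F r v ∧ lastFacet F r u ≤ lastFacet F r v := by
    by_contra! h
    have hvu := hcompat v u _ _ _ _ (hc.border_firstFacet_lastFacet (hne v))
      (hc.border_firstFacet_lastFacet (hne u)) (mem_Fblock_firstFacet_lastFacet (hne v))
      (mem_Fblock_firstFacet_lastFacet (hne u)) (by omega)
    exact hto.irrefl u (hto.trans _ _ _ huv hvu)
  rcases hlex with h | ⟨h, h'⟩
  · exact ⟨h.le, hc.lastFacet_le_of_firstFacet_lt (hne u) (hne v) h⟩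
  · exact ⟨h.le, h'⟩
end

section
/- Let G be a closed graph on [n] with respect to the given labelling, with lexicographic order induced by x_1 > ... > x_n > y_1 > ... > y_n. Then the initial ideal in(J_G) is generated by the monomials x_i y_j for edges {i,j} of G with i < j; in particular, in(J_G) is the edge ideal of a bipartite graph on the vertex set {x_1,...,x_n} ∪ {y_1,...,y_n}. -/
open MvPolynomial

/-- The exponent vector of the monomial `x_i * y_j` in `K[x_1,…,x_n,y_1,…,y_n]`,
where the variable set is `Fin n ⊕ Fin n` (`inl` for `x`, `inr` for `y`). -/
noncomputable def xy {n : ℕ} (i j : Fin n) : (Fin n ⊕ Fin n) →₀ ℕ :=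
  Finsupp.single (Sum.inl i) 1 + Finsupp.single (Sum.inr j) 1

/-- The generators `f_{ij} = x_i y_j - x_j y_i` of the binomial edge ideal of `G`. -/
def edgeGens (n : ℕ) (K : Type*) [Field K] (G : SimpleGraph (Fin n)) :
    Set (MvPolynomial (Fin n ⊕ Fin n) K) :=
  {f | ∃ i j : Fin n, i < j ∧ G.Adj i j ∧
    f = X (Sum.inl i) * X (Sum.inr j) - X (Sum.inl j) * X (Sum.inr i)}

/-- The leading monomial (with coefficient `1`) of `f` with respect to the term order `m`. -/
noncomputable def ldMon {σ K : Type*} [Field K] (m : MonomialOrder σ)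
    (f : MvPolynomial σ K) : MvPolynomial σ K :=
  monomial (m.toSyn.symm (f.support.sup fun d => m.toSyn d)) (1 : K)

/-- The generators `f_{ij}` of the binomial edge ideal `J_G` form a (quadratic) Gröbner
basis with respect to the term order `m`: their leading monomials generate the initial
ideal of `J_G`. -/
def HasQuadGB {n : ℕ} (K : Type*) [Field K] (G : SimpleGraph (Fin n))
    (m : MonomialOrder (Fin n ⊕ Fin n)) : Prop :=
  Ideal.span (ldMon m '' edgeGens n K G) =
    Ideal.span (ldMon m '' {f | f ∈ Ideal.span (edgeGens n K G) ∧ f ≠ 0})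

/-- The priority of a variable in the order `x_1 > x_2 > … > x_n > y_1 > … > y_n`
(smaller rank = bigger variable). -/
def rank (n : ℕ) : (Fin n ⊕ Fin n) → ℕ := Sum.elim (fun i => (i : ℕ)) (fun i => n + i)

/-- `m` is the lexicographic term order induced by `x_1 > … > x_n > y_1 > … > y_n`:
`u ≺ v` iff `u a < v a` at the most significant variable `a` where `u` and `v` differ. -/
def IsLexXY {n : ℕ} (m : MonomialOrder (Fin n ⊕ Fin n)) : Prop :=
  ∀ u v : (Fin n ⊕ Fin n) →₀ ℕ,
    m.toSyn u < m.toSyn v ↔ ∃ a, u a < v a ∧ ∀ b, rank n b < rank n a → u b = v b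

open scoped MonomialOrder

/-!
Orient the generators as `x_i y_j ⟶ x_j y_i` (`i < j`, `{i,j} ∈ E(G)`). Applied to factors of
monomials this is a rewriting relation that strictly decreases in the lex order, and closedness
of `G` is exactly what makes it locally confluent, so joinability is an equivalence relation on
monomials. Every multiple `h f_ij` has coefficient sum zero over each class, hence so has every
`f ∈ J_G`. If the leading monomial `μ` of `f` were irreducible, every monomial in its class would
rewrite down to `μ` and so be at least `μ`; the class would meet `supp f` only in `μ`, contradicting
`coeff μ f ≠ 0`. Hence `μ` is divisible by some `x_i y_j` with `i < j` an edge.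
-/

theorem Finsupp.exists_eq_add_of_add_eq_add {ι : Type*} {ν ρ a b : ι →₀ ℕ}
    (h : ν + a = ρ + b) (hab : a ⊓ b = 0) : ∃ τ, ν = τ + b ∧ ρ = τ + a := by
  refine ⟨ν ⊓ ρ, ?_, ?_⟩ <;> ext x <;>
  · have hx := DFunLike.congr_fun h x
    have habx := DFunLike.congr_fun hab x
    simp only [Finsupp.add_apply, Finsupp.inf_apply, Finsupp.coe_zero, Pi.zero_apply] at hx habx ⊢
    omega

theorem Relation.ReflTransGen.le_of_decreasing {α β : Type*} [Preorder β] {s : α → α → Prop}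
    {φ : α → β} (hφ : ∀ a b, s a b → φ b < φ a) {a b : α} (h : Relation.ReflTransGen s a b) :
    φ b ≤ φ a := by
  induction h with
  | refl => exact le_rfl
  | tail _ hbc ih => exact (hφ _ _ hbc).le.trans ih

section Rewriting

variable {σ R : Type*} [CommRing R]

def MonomialRewrite (r : (σ →₀ ℕ) → (σ →₀ ℕ) → Prop) (u v : σ →₀ ℕ) : Prop :=
  ∃ c a b, r a b ∧ u = c + a ∧ v = c + b

variable (R) in
def binomials (r : (σ →₀ ℕ) → (σ →₀ ℕ) → Prop) :
    Set (MvPolynomial σ R) :=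
  {f | ∃ a b, r a b ∧ f = monomial a 1 - monomial b 1}

noncomputable def weightedCoeffSum (g : (σ →₀ ℕ) → R) : MvPolynomial σ R →ₗ[R] R :=
  Finsupp.linearCombination R g ∘ₗ (AddMonoidAlgebra.coeffLinearEquiv R).toLinearMap

theorem weightedCoeffSum_monomial (g : (σ →₀ ℕ) → R) (d : σ →₀ ℕ) (c : R) :
    weightedCoeffSum g (monomial d c) = c * g d :=
  Finsupp.linearCombination_single R c d

theorem weightedCoeffSum_apply (g : (σ →₀ ℕ) → R) (f : MvPolynomial σ R) :
    weightedCoeffSum g f = ∑ d ∈ f.support, f.coeff d * g d :=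
  Finsupp.linearCombination_apply R (AddMonoidAlgebra.coeffLinearEquiv R f)

theorem ldMon_eq_monomial_degree {K : Type*} [Field K] (m : MonomialOrder σ)
    (f : MvPolynomial σ K) : ldMon m f = monomial (m.degree f) 1 :=
  rfl

variable {r : (σ →₀ ℕ) → (σ →₀ ℕ) → Prop}

theorem weightedCoeffSum_eq_zero_of_mem_span_binomials {g : (σ →₀ ℕ) → R}
    (hg : ∀ u v, MonomialRewrite r u v → g u = g v) {f : MvPolynomial σ R}
    (hf : f ∈ Ideal.span (binomials R r)) : weightedCoeffSum g f = 0 := by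
  suffices ∀ h, weightedCoeffSum g (h * f) = 0 by simpa using this 1
  induction hf using Submodule.span_induction with
  | mem p hp =>
    obtain ⟨a, b, hab, rfl⟩ := hp
    intro h
    induction h using MvPolynomial.induction_on' with
    | monomial c e =>
      rw [mul_sub, monomial_mul, monomial_mul, map_sub, weightedCoeffSum_monomial,
        weightedCoeffSum_monomial, hg _ _ ⟨c, a, b, hab, rfl, rfl⟩, sub_self]
    | add p q hp hq => rw [add_mul, map_add, hp, hq, add_zero]
  | zero => simp
  | add p q _ _ hp hq => intro h; rw [mul_add, map_add, hp, hq, add_zero]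
  | smul a p _ hp => intro h; rw [smul_eq_mul, ← mul_assoc, hp]

theorem exists_monomialRewrite_degree_of_mem_span_binomials (m : MonomialOrder σ)
    (hdec : ∀ u v, MonomialRewrite r u v → v ≺[m] u)
    (hconf : ∀ u v w, MonomialRewrite r u v → MonomialRewrite r u w →
      ∃ d, Relation.ReflGen (MonomialRewrite r) v d ∧
        Relation.ReflTransGen (MonomialRewrite r) w d)
    {f : MvPolynomial σ R} (hf : f ∈ Ideal.span (binomials R r)) (hf0 : f ≠ 0) :
    ∃ v, MonomialRewrite r (m.degree f) v := by
  classical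
  by_contra! hnf
  set μ := m.degree f
  set E := Relation.Join (Relation.ReflTransGen (MonomialRewrite r))
  have hE : Equivalence E := Relation.equivalence_join_reflTransGen hconf
  have hclass : ∀ d ∈ f.support, E d μ → d = μ := by
    rintro d hd ⟨e, hde, hμe⟩
    obtain rfl : μ = e := hμe.cases_head.resolve_right fun ⟨c, hc, _⟩ => hnf c hc
    exact m.toSyn.injective ((m.le_degree hd).antisymm (hde.le_of_decreasing hdec))
  have hg : ∀ u v, MonomialRewrite r u v →
      (if E u μ then 1 else 0 : R) = if E v μ then 1 else 0 := by
    intro u v huv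
    have huv : E u v := ⟨v, .single huv, .refl⟩
    rw [if_congr ⟨hE.trans huv, hE.trans (hE.symm huv)⟩ rfl rfl]
  have hzero := weightedCoeffSum_eq_zero_of_mem_span_binomials hg hf
  rw [weightedCoeffSum_apply, Finset.sum_eq_single_of_mem μ (m.degree_mem_support hf0)] at hzero
  · rw [if_pos (hE.refl μ), mul_one] at hzero
    exact mem_support_iff.mp (m.degree_mem_support hf0) hzero
  · intro d hd hdμ
    rw [if_neg (mt (hclass d hd) hdμ), mul_zero]

end Rewriting

section EdgeSwap

variable {n : ℕ}

def edgeSwap (G : SimpleGraph (Fin n)) (a b : (Fin n ⊕ Fin n) →₀ ℕ) : Prop :=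
  ∃ i j, i < j ∧ G.Adj i j ∧ a = xy i j ∧ b = xy j i

theorem monomialRewrite_edgeSwap {G : SimpleGraph (Fin n)} {i j : Fin n} (hij : i < j)
    (hadj : G.Adj i j) {c u v : (Fin n ⊕ Fin n) →₀ ℕ} (hu : u = c + xy i j)
    (hv : v = c + xy j i) : MonomialRewrite (edgeSwap G) u v :=
  ⟨c, _, _, ⟨i, j, hij, hadj, rfl, rfl⟩, hu, hv⟩

theorem X_inl_mul_X_inr (R : Type*) [CommRing R] (i j : Fin n) :
    (X (Sum.inl i) * X (Sum.inr j) : MvPolynomial (Fin n ⊕ Fin n) R) = monomial (xy i j) 1 := by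
  rw [X, X, monomial_mul, one_mul, xy]

theorem edgeGens_eq_binomials (K : Type*) [Field K] (G : SimpleGraph (Fin n)) :
    edgeGens n K G = binomials K (edgeSwap G) := by
  ext f
  simp only [edgeGens, binomials, edgeSwap, X_inl_mul_X_inr, Set.mem_ofPred_eq]
  constructor
  · rintro ⟨i, j, hij, hadj, rfl⟩
    exact ⟨_, _, ⟨i, j, hij, hadj, rfl, rfl⟩, rfl⟩
  · rintro ⟨_, _, ⟨i, j, hij, hadj, rfl, rfl⟩, rfl⟩
    exact ⟨i, j, hij, hadj, rfl⟩

theorem add_xy_lt_add_xy {m : MonomialOrder (Fin n ⊕ Fin n)} (hlex : IsLexXY m)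
    (c : (Fin n ⊕ Fin n) →₀ ℕ) {i j : Fin n} (hij : i < j) : c + xy j i ≺[m] c + xy i j := by
  refine (hlex _ _).2 ⟨Sum.inl i, ?_, ?_⟩
  · simp [xy, hij.ne']
  · rintro (k | k) hk
    · have hki : k < i := hk
      simp [xy, hki.ne', (hki.trans hij).ne']
    · simp only [rank, Sum.elim_inr, Sum.elim_inl] at hk
      omega

theorem toSyn_lt_of_monomialRewrite_edgeSwap {m : MonomialOrder (Fin n ⊕ Fin n)}
    (hlex : IsLexXY m) {G : SimpleGraph (Fin n)} {u v : (Fin n ⊕ Fin n) →₀ ℕ}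
    (h : MonomialRewrite (edgeSwap G) u v) : v ≺[m] u := by
  obtain ⟨c, _, _, ⟨i, j, hij, -, rfl, rfl⟩, rfl, rfl⟩ := h
  exact add_xy_lt_add_xy hlex c hij

theorem degree_X_inl_mul_X_inr_sub {R : Type*} [CommRing R] [Nontrivial R]
    {m : MonomialOrder (Fin n ⊕ Fin n)} (hlex : IsLexXY m) {i j : Fin n} (hij : i < j) :
    m.degree (X (Sum.inl i) * X (Sum.inr j) - X (Sum.inl j) * X (Sum.inr i) :
      MvPolynomial (Fin n ⊕ Fin n) R) = xy i j := by
  classical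
  have hlt : xy j i ≺[m] xy i j := by simpa using add_xy_lt_add_xy hlex 0 hij
  simp only [X_inl_mul_X_inr]
  rw [m.degree_sub_of_lt] <;> simp [m.degree_monomial, hlt]

theorem X_inl_mul_X_inr_sub_ne_zero {R : Type*} [CommRing R] [Nontrivial R] {i j : Fin n}
    (hij : i < j) :
    (X (Sum.inl i) * X (Sum.inr j) - X (Sum.inl j) * X (Sum.inr i) :
      MvPolynomial (Fin n ⊕ Fin n) R) ≠ 0 := by
  rw [X_inl_mul_X_inr, X_inl_mul_X_inr, sub_ne_zero, Ne, monomial_left_inj one_ne_zero]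
  intro h
  simpa [xy, hij.ne] using DFunLike.congr_fun h (Sum.inl i)

variable {G : SimpleGraph (Fin n)}

theorem monomialRewrite_edgeSwap_or_of_inl_eq (hclosed : ClosedWrt G (· < ·))
    {ν ρ : (Fin n ⊕ Fin n) →₀ ℕ} {i j l : Fin n}
    (hij : i < j) (hil : i < l) (hadj : G.Adj i j) (hadj' : G.Adj i l) (hjl : j ≠ l)
    (hu : ν + xy i j = ρ + xy i l) :
    MonomialRewrite (edgeSwap G) (ν + xy j i) (ρ + xy l i) ∨
      MonomialRewrite (edgeSwap G) (ρ + xy l i) (ν + xy j i) := by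
  have hu' : ν + Finsupp.single (Sum.inr j) 1 = ρ + Finsupp.single (Sum.inr l) 1 := by
    apply add_left_cancel (a := Finsupp.single (Sum.inl i) 1)
    simpa only [xy, add_left_comm] using hu
  obtain ⟨τ, rfl, rfl⟩ := Finsupp.exists_eq_add_of_add_eq_add hu' (by
    ext x; simp [Finsupp.single_apply]; grind)
  have hadjjl := (hclosed i j l hadj hadj' hjl).1 hij hil
  rcases hjl.lt_or_gt with hlt | hlt
  · exact .inl (monomialRewrite_edgeSwap hlt hadjjl (c := τ + Finsupp.single (Sum.inr i) 1)
      (by simp only [xy]; abel) (by simp only [xy]; abel))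
  · exact .inr (monomialRewrite_edgeSwap hlt hadjjl.symm (c := τ + Finsupp.single (Sum.inr i) 1)
      (by simp only [xy]; abel) (by simp only [xy]; abel))

theorem monomialRewrite_edgeSwap_or_of_inr_eq (hclosed : ClosedWrt G (· < ·))
    {ν ρ : (Fin n ⊕ Fin n) →₀ ℕ} {i j k : Fin n}
    (hij : i < j) (hkj : k < j) (hadj : G.Adj i j) (hadj' : G.Adj k j) (hik : i ≠ k)
    (hu : ν + xy i j = ρ + xy k j) :
    MonomialRewrite (edgeSwap G) (ν + xy j i) (ρ + xy j k) ∨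
      MonomialRewrite (edgeSwap G) (ρ + xy j k) (ν + xy j i) := by
  have hu' : ν + Finsupp.single (Sum.inl i) 1 = ρ + Finsupp.single (Sum.inl k) 1 := by
    apply add_right_cancel (b := Finsupp.single (Sum.inr j) 1)
    simpa only [xy, add_assoc] using hu
  obtain ⟨τ, rfl, rfl⟩ := Finsupp.exists_eq_add_of_add_eq_add hu' (by
    ext x; simp [Finsupp.single_apply]; grind)
  have hadjik := (hclosed j i k hadj.symm hadj'.symm hik).2 hij hkj
  rcases hik.lt_or_gt with hlt | hlt
  · exact .inr (monomialRewrite_edgeSwap hlt hadjik (c := τ + Finsupp.single (Sum.inl j) 1)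
      (by simp only [xy]; abel) (by simp only [xy]; abel))
  · exact .inl (monomialRewrite_edgeSwap hlt hadjik.symm (c := τ + Finsupp.single (Sum.inl j) 1)
      (by simp only [xy]; abel) (by simp only [xy]; abel))

theorem exists_monomialRewrite_edgeSwap_of_ne {ν ρ : (Fin n ⊕ Fin n) →₀ ℕ} {i j k l : Fin n}
    (hij : i < j) (hkl : k < l) (hadj : G.Adj i j) (hadj' : G.Adj k l) (hik : i ≠ k)
    (hjl : j ≠ l) (hu : ν + xy i j = ρ + xy k l) :
    ∃ d, MonomialRewrite (edgeSwap G) (ν + xy j i) d ∧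
      MonomialRewrite (edgeSwap G) (ρ + xy l k) d := by
  obtain ⟨τ, rfl, rfl⟩ := Finsupp.exists_eq_add_of_add_eq_add hu (by
    ext (x | x) <;> simp [xy, Finsupp.single_apply] <;> omega)
  exact ⟨τ + xy j i + xy l k, monomialRewrite_edgeSwap (c := τ + xy j i) hkl hadj' (by abel) rfl,
    monomialRewrite_edgeSwap (c := τ + xy l k) hij hadj (by abel) (by abel)⟩

theorem monomialRewrite_edgeSwap_confluent (hclosed : ClosedWrt G (· < ·))
    (u v w : (Fin n ⊕ Fin n) →₀ ℕ) (huv : MonomialRewrite (edgeSwap G) u v)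
    (huw : MonomialRewrite (edgeSwap G) u w) :
    ∃ d, Relation.ReflGen (MonomialRewrite (edgeSwap G)) v d ∧
      Relation.ReflTransGen (MonomialRewrite (edgeSwap G)) w d := by
  obtain ⟨ν, _, _, ⟨i, j, hij, hadj, rfl, rfl⟩, rfl, rfl⟩ := huv
  obtain ⟨ρ, _, _, ⟨k, l, hkl, hadj', rfl, rfl⟩, hu, rfl⟩ := huw
  have join_of_or : ∀ {v w}, MonomialRewrite (edgeSwap G) v w ∨ MonomialRewrite (edgeSwap G) w v →
      ∃ d, Relation.ReflGen (MonomialRewrite (edgeSwap G)) v d ∧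
        Relation.ReflTransGen (MonomialRewrite (edgeSwap G)) w d := by
    rintro v w (h | h)
    exacts [⟨w, .single h, .refl⟩, ⟨v, .refl, .single h⟩]
  obtain rfl | hik := eq_or_ne i k <;> obtain rfl | hjl := eq_or_ne j l
  · exact ⟨_, .refl, by rw [add_right_cancel hu]⟩
  · exact join_of_or (monomialRewrite_edgeSwap_or_of_inl_eq hclosed hij hkl hadj hadj' hjl hu)
  · exact join_of_or (monomialRewrite_edgeSwap_or_of_inr_eq hclosed hij hkl hadj hadj' hik hu)
  · obtain ⟨d, hvd, hwd⟩ := exists_monomialRewrite_edgeSwap_of_ne hij hkl hadj hadj' hik hjl hu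
    exact ⟨d, .single hvd, .single hwd⟩

end EdgeSwap

/-- Let `G` be a graph on `[n]`, closed with respect to the given
labelling, and let `≺` be the lexicographic order induced by
`x_1 > … > x_n > y_1 > … > y_n`. Then the initial ideal `in(J_G)` is generated by the
monomials `x_i y_j` for the edges `{i,j}` of `G` with `i < j`; in particular it is the
edge ideal of a bipartite graph on `{x_1,…,x_n} ∪ {y_1,…,y_n}`. -/
theorem stmt16 {n : ℕ} (K : Type*) [Field K] (G : SimpleGraph (Fin n))
    (hclosed : ClosedWrt G (fun a b : Fin n => a < b))
    (m : MonomialOrder (Fin n ⊕ Fin n)) (hlex : IsLexXY m) :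
    Ideal.span (ldMon m '' {f | f ∈ Ideal.span (edgeGens n K G) ∧ f ≠ 0}) =
      Ideal.span {p : MvPolynomial (Fin n ⊕ Fin n) K | ∃ i j : Fin n,
        i < j ∧ G.Adj i j ∧ p = X (Sum.inl i) * X (Sum.inr j)} := by
  apply le_antisymm <;> rw [Ideal.span_le]
  · rintro _ ⟨f, ⟨hf, hf0⟩, rfl⟩
    rw [edgeGens_eq_binomials] at hf
    obtain ⟨_, c, _, _, ⟨i, j, hij, hadj, rfl, -⟩, hdeg, -⟩ :=
      exists_monomialRewrite_degree_of_mem_span_binomials m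
        (fun _ _ => toSyn_lt_of_monomialRewrite_edgeSwap hlex)
        (monomialRewrite_edgeSwap_confluent hclosed) hf hf0
    rw [SetLike.mem_coe, ldMon_eq_monomial_degree, hdeg, ← one_mul (1 : K), ← monomial_mul,
      ← X_inl_mul_X_inr]
    exact Ideal.mul_mem_left _ _ (Ideal.subset_span ⟨i, j, hij, hadj, rfl⟩)
  · rintro _ ⟨i, j, hij, hadj, rfl⟩
    refine Ideal.subset_span ⟨_, ⟨Ideal.subset_span ⟨i, j, hij, hadj, rfl⟩,
      X_inl_mul_X_inr_sub_ne_zero hij⟩, ?_⟩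
    rw [ldMon_eq_monomial_degree, degree_X_inl_mul_X_inr_sub hlex hij, X_inl_mul_X_inr]
end
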